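/- A set Y ⊆ F is a contrastive explanation (CXp), i.e., a subset-minimal WCXp, if and only if Y is a minimal hitting set of the collection of all abductive explanations (AXps). -/

import Mathlib

def WAXp {m : ℕ} {K : Type*} (F : Set (Fin m → ℝ)) (κ : (Fin m → ℝ) → K)
    (v : Fin m → ℝ) (c : K) (X : Set (Fin m)) : Prop :=
  ∀ x ∈ F, (∀ i ∈ X, x i = v i) → κ x = c

def WCXp {m : ℕ} {K : Type*} (F : Set (Fin m → ℝ)) (κ : (Fin m → ℝ) → K)
    (v : Fin m → ℝ) (c : K) (Y : Set (Fin m)) : Prop :=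
  ∃ x ∈ F, (∀ i ∉ Y, x i = v i) ∧ κ x ≠ c

/-- AXp: a subset-minimal WAXp. -/
def AXp {m : ℕ} {K : Type*} (F : Set (Fin m → ℝ)) (κ : (Fin m → ℝ) → K)
    (v : Fin m → ℝ) (c : K) (X : Set (Fin m)) : Prop :=
  WAXp F κ v c X ∧ ∀ X' ⊂ X, ¬ WAXp F κ v c X'

/-- CXp: a subset-minimal WCXp. -/
def CXp {m : ℕ} {K : Type*} (F : Set (Fin m → ℝ)) (κ : (Fin m → ℝ) → K)
    (v : Fin m → ℝ) (c : K) (Y : Set (Fin m)) : Prop :=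
  WCXp F κ v c Y ∧ ∀ Y' ⊂ Y, ¬ WCXp F κ v c Y'

/-- H is a hitting set of the collection B. -/
def HittingSet {α : Type*} (B : Set (Set α)) (H : Set α) : Prop :=
  ∀ P ∈ B, (H ∩ P).Nonempty

/-- H is a minimal hitting set of B. -/
def MinHittingSet {α : Type*} (B : Set (Set α)) (H : Set α) : Prop :=
  HittingSet B H ∧ ∀ H' ⊂ H, ¬ HittingSet B H'

/-! Since `Yᶜ` is a WAXp exactly when `Y` is not a WCXp, and WAXps are upward closed, `Y` is a
WCXp iff it meets every WAXp, iff it meets every AXp (every WAXp contains an AXp because the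
feature set is finite). Taking subset-minimal elements of both sides gives the duality. -/

section

variable {m : ℕ} {K : Type*} {F : Set (Fin m → ℝ)} {κ : (Fin m → ℝ) → K} {v : Fin m → ℝ} {c : K}

theorem WAXp.mono {X X' : Set (Fin m)} (hX : WAXp F κ v c X) (h : X ⊆ X') :
    WAXp F κ v c X' :=
  fun x hx hagree ↦ hX x hx fun i hi ↦ hagree i (h hi)

theorem waxp_compl_iff_not_wcxp {Y : Set (Fin m)} : WAXp F κ v c Yᶜ ↔ ¬ WCXp F κ v c Y := by
  simp only [WAXp, WCXp, Set.mem_compl_iff]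
  push Not
  rfl

theorem axp_iff_minimal {X : Set (Fin m)} : AXp F κ v c X ↔ Minimal (WAXp F κ v c) X := by
  rw [Set.minimal_iff_forall_ssubset]
  rfl

theorem WAXp.exists_axp_subset {X : Set (Fin m)} (hX : WAXp F κ v c X) :
    ∃ X' ⊆ X, AXp F κ v c X' := by
  simpa only [axp_iff_minimal] using exists_minimal_le_of_wellFoundedLT _ X hX

theorem WCXp.inter_nonempty_of_waxp {X Y : Set (Fin m)} (hY : WCXp F κ v c Y)
    (hX : WAXp F κ v c X) : (Y ∩ X).Nonempty := by
  by_contra hdisj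
  have hXY : X ⊆ Yᶜ := fun i hi hiY ↦ hdisj ⟨i, hiY, hi⟩
  exact waxp_compl_iff_not_wcxp.mp (hX.mono hXY) hY

theorem hittingSet_axp_iff_wcxp {Y : Set (Fin m)} :
    HittingSet {X | AXp F κ v c X} Y ↔ WCXp F κ v c Y := by
  refine ⟨fun hhit ↦ ?_, fun hY X hX ↦ hY.inter_nonempty_of_waxp hX.1⟩
  by_contra hY
  obtain ⟨X, hXY, hX⟩ := (waxp_compl_iff_not_wcxp.mpr hY).exists_axp_subset
  obtain ⟨i, hiY, hiX⟩ := hhit X hX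
  exact hXY hiX hiY

end

theorem cxp_iff_mhs_of_axps_general {m : ℕ} {K : Type*} (F : Set (Fin m → ℝ))
    (κ : (Fin m → ℝ) → K) (v : Fin m → ℝ) (c : K)
    (Y : Set (Fin m)) :
    CXp F κ v c Y ↔ MinHittingSet {X | AXp F κ v c X} Y := by
  simp only [CXp, MinHittingSet, hittingSet_axp_iff_wcxp]

/-- MHS duality: Y is a CXp iff Y is a minimal hitting set of the AXps. -/
theorem cxp_iff_mhs_of_axps {m : ℕ} {K : Type*} (F : Set (Fin m → ℝ))
    (κ : (Fin m → ℝ) → K) (v : Fin m → ℝ) (c : K)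
    (hF : F.Finite) (hFne : F.Nonempty) (hv : v ∈ F) (hc : κ v = c)
    (Y : Set (Fin m)) :
    CXp F κ v c Y ↔ MinHittingSet {X | AXp F κ v c X} Y :=
  cxp_iff_mhs_of_axps_general F κ v c Y
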